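/- Let f be analytic on the closed disk |z − s₀| ≤ r with f(s₀) ≠ 0, where 0 < r ≤ C for an absolute constant C. Set M_r(s₀) = max_{|z−s₀|≤r} |f(z)/f(s₀)| + 3 and let N_{r−δ}(s₀) be the number of zeros of f in |z − s₀| ≤ r − δ (with multiplicity). Then for 0 < δ < r/2, N_{r−δ}(s₀) ≤ (r/δ)·(log M_r(s₀) + log 10), provided |f(s₀)| ≥ 1/10. -/

import Mathlib

/-!
Jensen's inequality bounds the number of zeros in `closedBall c ρ` by
`log (M / ‖f c‖) / log (R / ρ)` when `‖f‖ ≤ M` on the sphere of radius `R > ρ`, and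
`log (R / (R - δ)) ≥ δ / R`. Take `M = 10 (M_r + 3) ‖f s₀‖`: it bounds `‖f‖` on the circle, it is
at least `1` because `‖f s₀‖ ≥ 1 / 10`, and `log (M / ‖f s₀‖) = log (M_r + 3) + log 10`.
-/

open Metric Function MeromorphicOn

section

variable {𝕜 : Type*} [NontriviallyNormedField 𝕜] {E : Type*} [NormedAddCommGroup E]
  [NormedSpace 𝕜 E] {f : 𝕜 → E} {U : Set 𝕜}

/-- Where `f` vanishes identically near `z`, both sides are `0` (`ENat.toNat ⊤ = 0`). -/
lemma AnalyticOnNhd.divisor_apply_eq_toNat (hf : AnalyticOnNhd 𝕜 f U) {z : 𝕜} (hz : z ∈ U) :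
    divisor f U z = (analyticOrderAt f z).toNat := by
  rw [hf.divisor_apply hz]
  induction analyticOrderAt f z using ENat.recTopCoe <;> simp

lemma AnalyticOnNhd.tsum_toNat_analyticOrderAt_eq_finsum_divisor
    (hf : AnalyticOnNhd 𝕜 f U) (hU : IsCompact U) :
    ∑' z : U, ((analyticOrderAt f z).toNat : ℝ) = ((∑ᶠ u, divisor f U u : ℤ) : ℝ) := by
  have hsupport : support (fun u => (divisor f U u : ℝ)) ⊆ support (divisor f U) :=
    support_comp_subset Int.cast_zero _
  calc ∑' z : U, ((analyticOrderAt f z).toNat : ℝ)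
      = ∑' z : U, (divisor f U z : ℝ) := by
        refine tsum_congr fun z => ?_
        rw [hf.divisor_apply_eq_toNat z.2, Int.cast_natCast]
    _ = ∑' u, (divisor f U u : ℝ) :=
        tsum_subtype_eq_of_support_subset (hsupport.trans (divisor f U).supportWithinDomain)
    _ = ∑ᶠ u, (divisor f U u : ℝ) :=
        tsum_eq_finsum (((divisor f U).finiteSupport hU).subset hsupport)
    _ = ((∑ᶠ u, divisor f U u : ℤ) : ℝ) :=
        (map_finsum (Int.castRingHom ℝ) ((divisor f U).finiteSupport hU)).symm

end

lemma Real.div_le_log_div_sub {R δ : ℝ} (hδR : δ < R) (hR : 0 < R) :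
    δ / R ≤ Real.log (R / (R - δ)) := by
  have := Real.one_sub_inv_le_log_of_pos (div_pos hR (sub_pos.2 hδR))
  rwa [inv_div, one_sub_div hR.ne', sub_sub_cancel] at this

lemma AnalyticOnNhd.finsum_divisor_closedBall_sub_le {c : ℂ} {R δ M : ℝ} {f : ℂ → ℂ}
    (hδ : 0 < δ) (hδR : δ < R) (hM : 1 ≤ M) (hf : AnalyticOnNhd ℂ f (closedBall c R))
    (hfc : f c ≠ 0) (hbound : ∀ z ∈ sphere c R, ‖f z‖ ≤ M) :
    ((∑ᶠ u, divisor f (closedBall c (R - δ)) u : ℤ) : ℝ) ≤ R / δ * Real.log (M / ‖f c‖) := by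
  have hR : 0 < R := hδ.trans hδR
  have hRδ : 0 < R - δ := sub_pos.2 hδR
  have jensen : ((∑ᶠ u, divisor f (closedBall c (R - δ)) u : ℤ) : ℝ)
      ≤ Real.log (M / ‖f c‖) / Real.log (R / (R - δ)) := by
    have := AnalyticOnNhd.sum_divisor_le (c := c) (r := R - δ) (R := R) (abs_pos_of_pos hRδ)
      (by rw [abs_of_pos hRδ, abs_of_pos hR]; linarith) hM (by rwa [abs_of_pos hR]) hfc
      (by rwa [abs_of_pos hR])
    rwa [abs_of_pos hRδ] at this
  have hlog_pos : 0 < Real.log (R / (R - δ)) :=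
    Real.log_pos ((one_lt_div hRδ).2 (by linarith))
  have hcount_nonneg : (0 : ℝ) ≤ ((∑ᶠ u, divisor f (closedBall c (R - δ)) u : ℤ) : ℝ) :=
    Int.cast_nonneg_iff.2 <| finsum_nonneg
      (hf.mono (closedBall_subset_closedBall (by linarith))).divisor_nonneg
  have hlog_nonneg : 0 ≤ Real.log (M / ‖f c‖) := by
    simpa using (le_div_iff₀ hlog_pos).1 (hcount_nonneg.trans jensen)
  calc _ ≤ Real.log (M / ‖f c‖) / Real.log (R / (R - δ)) := jensen
    _ ≤ Real.log (M / ‖f c‖) / (δ / R) :=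
        div_le_div_of_nonneg_left hlog_nonneg (by positivity) (Real.div_le_log_div_sub hδR hR)
    _ = R / δ * Real.log (M / ‖f c‖) := by field_simp

lemma norm_le_sSup_image_norm_div_mul {X 𝕜 : Type*} [TopologicalSpace X] [NormedField 𝕜]
    {f : X → 𝕜} {K : Set X} (hK : IsCompact K) (hf : ContinuousOn f K) {a : 𝕜} (ha : a ≠ 0)
    {z : X} (hz : z ∈ K) :
    ‖f z‖ ≤ sSup ((fun z => ‖f z / a‖) '' K) * ‖a‖ := by
  rw [← div_le_iff₀ (norm_pos_iff.2 ha), ← norm_div]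
  exact le_csSup (hK.bddAbove_image (hf.div_const a).norm) ⟨z, hz, rfl⟩

theorem stmt16_general (f : ℂ → ℂ) (s₀ : ℂ) (r δ : ℝ)
    (hδ : 0 < δ) (hδr : δ < r / 2)
    (hf : ∀ z ∈ Metric.closedBall s₀ r, AnalyticAt ℂ f z)
    (hfs₀ : f s₀ ≠ 0) (hf10 : (1 : ℝ) / 10 ≤ ‖f s₀‖) :
    (∑' z : Metric.closedBall s₀ (r - δ),
        (((analyticOrderAt f z).toNat : ℕ) : ℝ))
      ≤ (r / δ) *
          (Real.log (sSup ((fun z => ‖f z / f s₀‖) '' Metric.closedBall s₀ r) + 3) +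
            Real.log 10) := by
  set S := sSup ((fun z => ‖f z / f s₀‖) '' closedBall s₀ r)
  have hf : AnalyticOnNhd ℂ f (closedBall s₀ r) := hf
  have hS_nonneg : 0 ≤ S := Real.sSup_nonneg (by rintro _ ⟨z, -, rfl⟩; positivity)
  have hf_le (z : ℂ) (hz : z ∈ sphere s₀ r) : ‖f z‖ ≤ 10 * (S + 3) * ‖f s₀‖ := by
    have := norm_le_sSup_image_norm_div_mul (isCompact_closedBall s₀ r) hf.continuousOn hfs₀
      (sphere_subset_closedBall hz)
    nlinarith [norm_nonneg (f s₀)]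
  have hM : 1 ≤ 10 * (S + 3) * ‖f s₀‖ := by nlinarith
  have hf_inner : AnalyticOnNhd ℂ f (closedBall s₀ (r - δ)) :=
    hf.mono (closedBall_subset_closedBall (by linarith))
  rw [hf_inner.tsum_toNat_analyticOrderAt_eq_finsum_divisor (isCompact_closedBall _ _)]
  calc _ ≤ r / δ * Real.log (10 * (S + 3) * ‖f s₀‖ / ‖f s₀‖) :=
        hf.finsum_divisor_closedBall_sub_le hδ (by linarith) hM hfs₀ hf_le
    _ = r / δ * (Real.log (S + 3) + Real.log 10) := by
        rw [mul_div_cancel_right₀ _ (norm_ne_zero_iff.2 hfs₀),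
          Real.log_mul (by norm_num) (by positivity)]
        ring

theorem stmt16 (f : ℂ → ℂ) (s₀ : ℂ) (r δ : ℝ) (hr : 0 < r)
    (hδ : 0 < δ) (hδr : δ < r / 2)
    (hf : ∀ z ∈ Metric.closedBall s₀ r, AnalyticAt ℂ f z)
    (hfs₀ : f s₀ ≠ 0) (hf10 : (1 : ℝ) / 10 ≤ ‖f s₀‖) :
    (∑' z : Metric.closedBall s₀ (r - δ),
        (((analyticOrderAt f z).toNat : ℕ) : ℝ))
      ≤ (r / δ) *
          (Real.log (sSup ((fun z => ‖f z / f s₀‖) '' Metric.closedBall s₀ r) + 3) +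
            Real.log 10) :=
  stmt16_general f s₀ r δ hδ hδr hf hfs₀ hf10
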